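/- Let H be a real Hilbert space (complete real inner product space). Let φ₁, φ₂ : H → EReal be proper, convex, lower semicontinuous functions whose effective domains intersect: there exists x ∈ H with both φ₁(x) and φ₂(x) finite. Then interior(R(∂φ₁) + R(∂φ₂)) ⊆ interior(R(∂(φ₁ + φ₂))), where R(∂φ) = {y ∈ H : ∃ x, y ∈ ∂φ(x)}, the sum of two subsets of H is the Minkowski sum, and interiors are taken in the norm topology of H. -/

import Mathlib

/-!
If `y` is interior to `R(∂φ₁) + R(∂φ₂)`, then for every `v` in a small ball `φ₁ + φ₂` has an
affine minorant of slope `y + v`. Hence `g = φ₁ + φ₂ - ⟪y, ·⟫` is coercive: its sublevel sets are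
weakly bounded, hence bounded by the uniform boundedness principle. A convex lower semicontinuous
coercive function on a Hilbert space attains its infimum (the least-norm points of the nested
sublevel sets form a Cauchy sequence), and at a minimizer `q` of `g` we get `y ∈ ∂(φ₁ + φ₂)(q)`.
-/

open scoped Pointwise

/-- The subdifferential of `φ : H → EReal` at `x`. -/
def SubDiff {H : Type*} [NormedAddCommGroup H] [InnerProductSpace ℝ H]
    (φ : H → EReal) (x : H) : Set H :=
  {y | φ x ≠ ⊤ ∧ φ x ≠ ⊥ ∧ ∀ z : H, φ x + ((inner ℝ y (z - x) : ℝ) : EReal) ≤ φ z}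

/-- The range of the subdifferential of `φ`. -/
def SubDiffRange {H : Type*} [NormedAddCommGroup H] [InnerProductSpace ℝ H]
    (φ : H → EReal) : Set H :=
  {y | ∃ x : H, y ∈ SubDiff φ x}

/-- `φ` is proper: never `-∞` and finite somewhere. -/
def ProperFun {H : Type*} (φ : H → EReal) : Prop :=
  (∀ x : H, φ x ≠ ⊥) ∧ ∃ x : H, φ x ≠ ⊤

/-- Convexity for an `EReal`-valued function. -/
def ConvexFunEReal {H : Type*} [AddCommGroup H] [Module ℝ H] (φ : H → EReal) : Prop :=
  ∀ x y : H, ∀ a b : ℝ, 0 ≤ a → 0 ≤ b → a + b = 1 →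
    φ (a • x + b • y) ≤ (a : EReal) * φ x + (b : EReal) * φ y

open RealInnerProductSpace Set Filter Topology Bornology

theorem LowerSemicontinuous.ereal_add {α : Type*} [TopologicalSpace α] {f g : α → EReal}
    (hf : LowerSemicontinuous f) (hg : LowerSemicontinuous g) (hf' : ∀ x, f x ≠ ⊥)
    (hg' : ∀ x, g x ≠ ⊥) :
    LowerSemicontinuous (fun x => f x + g x) :=
  hf.add' hg fun x => EReal.continuousAt_add (.inr (hg' x)) (.inl (hf' x))

section Hilbert

variable {H : Type*} [NormedAddCommGroup H] [InnerProductSpace ℝ H]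

def HasAffineMinorant (f : H → EReal) (w : H) : Prop :=
  ∃ C : ℝ, ∀ x, ((⟪w, x⟫ - C : ℝ) : EReal) ≤ f x

theorem HasAffineMinorant.ne_bot {f : H → EReal} {w : H} (h : HasAffineMinorant f w) (x : H) :
    f x ≠ ⊥ := by
  obtain ⟨C, hC⟩ := h
  exact ne_bot_of_le_ne_bot (EReal.coe_ne_bot _) (hC x)

theorem HasAffineMinorant.add {f g : H → EReal} {w v : H} (hf : HasAffineMinorant f w)
    (hg : HasAffineMinorant g v) : HasAffineMinorant (fun x => f x + g x) (w + v) := by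
  obtain ⟨C, hC⟩ := hf
  obtain ⟨D, hD⟩ := hg
  refine ⟨C + D, fun x => ?_⟩
  calc ((⟪w + v, x⟫ - (C + D) : ℝ) : EReal)
      = ((⟪w, x⟫ - C : ℝ) : EReal) + ((⟪v, x⟫ - D : ℝ) : EReal) := by
        rw [← EReal.coe_add, inner_add_left]; ring_nf
    _ ≤ f x + g x := add_le_add (hC x) (hD x)

theorem hasAffineMinorant_inner (w : H) : HasAffineMinorant (fun x => ((⟪w, x⟫ : ℝ) : EReal)) w :=
  ⟨0, fun x => by simp⟩

theorem hasAffineMinorant_of_mem_subDiffRange {f : H → EReal} {w : H} (hw : w ∈ SubDiffRange f) :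
    HasAffineMinorant f w := by
  obtain ⟨x, htop, hbot, hx⟩ := hw
  obtain ⟨r, hr⟩ : ∃ r : ℝ, f x = r := ⟨_, (EReal.coe_toReal htop hbot).symm⟩
  refine ⟨⟪w, x⟫ - r, fun z => ?_⟩
  calc ((⟪w, z⟫ - (⟪w, x⟫ - r) : ℝ) : EReal) = f x + ((⟪w, z - x⟫ : ℝ) : EReal) := by
        rw [hr, ← EReal.coe_add, inner_sub_right]; ring_nf
    _ ≤ f z := hx z

theorem hasAffineMinorant_of_mem_add_subDiffRange {f g : H → EReal} {w : H}
    (hw : w ∈ SubDiffRange f + SubDiffRange g) : HasAffineMinorant (fun x => f x + g x) w := by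
  obtain ⟨w₁, hw₁, w₂, hw₂, rfl⟩ := hw
  exact (hasAffineMinorant_of_mem_subDiffRange hw₁).add (hasAffineMinorant_of_mem_subDiffRange hw₂)

theorem ConvexFunEReal.add {f g : H → EReal} (hf : ConvexFunEReal f) (hg : ConvexFunEReal g) :
    ConvexFunEReal (fun x => f x + g x) := by
  intro x y a b ha hb hab
  calc f (a • x + b • y) + g (a • x + b • y)
      ≤ (a * f x + b * f y) + (a * g x + b * g y) :=
        add_le_add (hf x y a b ha hb hab) (hg x y a b ha hb hab)
    _ = a * (f x + g x) + b * (f y + g y) := by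
        rw [EReal.left_distrib_of_nonneg_of_ne_top (EReal.coe_nonneg.2 ha) (EReal.coe_ne_top a),
          EReal.left_distrib_of_nonneg_of_ne_top (EReal.coe_nonneg.2 hb) (EReal.coe_ne_top b),
          add_add_add_comm]

theorem convexFunEReal_inner (w : H) : ConvexFunEReal (fun x => ((⟪w, x⟫ : ℝ) : EReal)) := by
  intro x y a b _ _ _
  dsimp only
  rw [inner_add_right, real_inner_smul_right, real_inner_smul_right]
  norm_cast

theorem ConvexFunEReal.quasiconvexOn {f : H → EReal} (hf : ConvexFunEReal f) :
    QuasiconvexOn ℝ univ f := by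
  intro r x hx y hy a b ha hb hab
  refine ⟨trivial, ?_⟩
  calc f (a • x + b • y) ≤ a * f x + b * f y := hf x y a b ha hb hab
    _ ≤ a * r + b * r := add_le_add (mul_le_mul_of_nonneg_left hx.2 (EReal.coe_nonneg.2 ha))
        (mul_le_mul_of_nonneg_left hy.2 (EReal.coe_nonneg.2 hb))
    _ = r := by
        rw [← EReal.right_distrib_of_nonneg (EReal.coe_nonneg.2 ha) (EReal.coe_nonneg.2 hb),
          ← EReal.coe_add, hab, EReal.coe_one, one_mul]

theorem isBounded_of_forall_inner_le [CompleteSpace H] {s : Set H}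
    (h : ∀ u : H, ∃ M : ℝ, ∀ x ∈ s, ⟪x, u⟫ ≤ M) : IsBounded s := by
  have hpt : ∀ u : H, ∃ M : ℝ, ∀ x : s, ‖innerSL ℝ (x : H) u‖ ≤ M := by
    intro u
    obtain ⟨M₁, h₁⟩ := h u
    obtain ⟨M₂, h₂⟩ := h (-u)
    refine ⟨max M₁ M₂, fun x => abs_le.2 ⟨?_, (h₁ x x.2).trans (le_max_left _ _)⟩⟩
    have := h₂ x x.2
    rw [inner_neg_right] at this
    simp only [innerSL_apply_apply]
    linarith [le_max_right M₁ M₂]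
  obtain ⟨R, hR⟩ := banach_steinhaus hpt
  exact isBounded_iff_forall_norm_le.2 ⟨R, fun x hx => by simpa using hR ⟨x, hx⟩⟩

theorem isBounded_setOf_le_of_hasAffineMinorant [CompleteSpace H] {g : H → EReal} {ε : ℝ}
    (hε : 0 < ε) (hg : ∀ v ∈ Metric.ball (0 : H) ε, HasAffineMinorant g v) {t : EReal}
    (ht : t ≠ ⊤) : IsBounded {x | g x ≤ t} := by
  refine isBounded_of_forall_inner_le fun u => ?_
  obtain ⟨k, hk, hku⟩ := exists_pos_mul_lt hε ‖u‖
  obtain ⟨C, hC⟩ := hg (k • u) (by simpa [norm_smul, abs_of_pos hk, mul_comm] using hku)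
  refine ⟨(t.toReal + C) / k, fun x hx => ?_⟩
  have hle : ⟪k • u, x⟫ - C ≤ t.toReal :=
    EReal.coe_le_coe_iff.1 ((hC x).trans (hx.trans (EReal.le_coe_toReal ht)))
  rw [real_inner_smul_left, real_inner_comm] at hle
  rw [le_div_iff₀ hk]
  linarith

theorem norm_sub_sq_le_of_inner_nonneg {a b : H} (h : 0 ≤ ⟪a, b - a⟫) :
    ‖b - a‖ ^ 2 ≤ ‖b‖ ^ 2 - ‖a‖ ^ 2 := by
  have := norm_add_sq_real a (b - a)
  rw [add_sub_cancel] at this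
  linarith

theorem nonempty_iInter_of_antitone_of_convex [CompleteSpace H] {C : ℕ → Set H}
    (hanti : Antitone C) (hne : ∀ n, (C n).Nonempty) (hcl : ∀ n, IsClosed (C n))
    (hcv : ∀ n, Convex ℝ (C n)) (hbd : IsBounded (C 0)) : (⋂ n, C n).Nonempty := by
  -- `p n` will be the point of least norm in `C n`
  have hmin : ∀ n, ∃ p ∈ C n, ∀ w ∈ C n, 0 ≤ ⟪p, w - p⟫ := fun n => by
    obtain ⟨p, hp, hnorm⟩ := exists_norm_eq_iInf_of_complete_convex (hne n) (hcl n).isComplete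
      (hcv n) 0
    refine ⟨p, hp, fun w hw => ?_⟩
    have := (norm_eq_iInf_iff_real_inner_le_zero (hcv n) hp).1 hnorm w hw
    rwa [zero_sub, inner_neg_left, neg_nonpos] at this
  choose p hp hpmin using hmin
  have hdist : ∀ m n, m ≤ n → ‖p n - p m‖ ^ 2 ≤ ‖p n‖ ^ 2 - ‖p m‖ ^ 2 := fun m n hmn =>
    norm_sub_sq_le_of_inner_nonneg (hpmin m _ (hanti hmn (hp n)))
  have hmono : Monotone fun n => ‖p n‖ ^ 2 := fun m n hmn => by
    linarith [hdist m n hmn, sq_nonneg ‖p n - p m‖]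
  obtain ⟨R, hR⟩ := isBounded_iff_forall_norm_le.1 hbd
  have hbdd : BddAbove (range fun n => ‖p n‖ ^ 2) := ⟨R ^ 2, by
    rintro _ ⟨n, rfl⟩
    exact pow_le_pow_left₀ (norm_nonneg _) (hR _ (hanti (Nat.zero_le n) (hp n))) 2⟩
  have hcauchy : CauchySeq p := by
    refine Metric.cauchySeq_iff'.2 fun ε hε => ?_
    obtain ⟨N, hN⟩ := Metric.cauchySeq_iff'.1 (tendsto_atTop_ciSup hmono hbdd).cauchySeq
      (ε ^ 2) (by positivity)
    refine ⟨N, fun n hn => ?_⟩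
    have hN' := hN n hn
    rw [Real.dist_eq, abs_of_nonneg (by linarith [hmono hn])] at hN'
    rw [dist_eq_norm]
    exact lt_of_pow_lt_pow_left₀ 2 hε.le (by linarith [hdist N n hn])
  obtain ⟨q, hq⟩ := cauchySeq_tendsto_of_complete hcauchy
  exact ⟨q, mem_iInter.2 fun n => (hcl n).mem_of_tendsto hq
    (eventually_atTop.2 ⟨n, fun k hk => hanti hk (hp k)⟩)⟩

theorem LowerSemicontinuous.exists_forall_le_of_quasiconvexOn [CompleteSpace H] {g : H → EReal}
    (hl : LowerSemicontinuous g) (hq : QuasiconvexOn ℝ univ g)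
    (hb : ∀ t ≠ ⊤, IsBounded {x | g x ≤ t}) : ∃ q, ∀ z, g q ≤ g z := by
  rcases eq_or_lt_of_le (le_top : ⨅ x, g x ≤ ⊤) with htop | hlt
  · exact ⟨0, fun z => by simp [iInf_eq_top.1 htop]⟩
  obtain ⟨u, hu, hmem, hlim⟩ := exists_seq_strictAnti_tendsto' hlt
  obtain ⟨q, hq⟩ := nonempty_iInter_of_antitone_of_convex (C := fun n => {x | g x ≤ u n})
    (fun m n hmn x hx => hx.trans (hu.antitone hmn))
    (fun n => let ⟨x, hx⟩ := iInf_lt_iff.1 (hmem n).1; ⟨x, hx.le⟩)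
    (fun n => hl.isClosed_preimage (u n))
    (fun n => by simpa using hq (u n))
    (hb (u 0) (hmem 0).2.ne)
  exact ⟨q, fun z => (ge_of_tendsto' hlim fun n => mem_iInter.1 hq n).trans (iInf_le _ z)⟩

theorem mem_subDiff_of_forall_le {f : H → EReal} {y q : H} (hfin : ∃ x, f x ≠ ⊤) (hbot : f q ≠ ⊥)
    (hmin : ∀ z, f q + ((⟪-y, q⟫ : ℝ) : EReal) ≤ f z + ((⟪-y, z⟫ : ℝ) : EReal)) :
    y ∈ SubDiff f q := by
  obtain ⟨x, hx⟩ := hfin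
  refine ⟨fun htop => ?_, hbot, fun z => ?_⟩
  · have := hmin x
    rw [htop, EReal.top_add_coe, top_le_iff] at this
    exact EReal.add_lt_top hx (EReal.coe_ne_top _) |>.ne this
  calc f q + ((⟪y, z - q⟫ : ℝ) : EReal)
      = f q + ((⟪-y, q⟫ : ℝ) : EReal) + ((⟪y, z⟫ : ℝ) : EReal) := by
        rw [add_assoc, ← EReal.coe_add, inner_sub_right, inner_neg_left]; ring_nf
    _ ≤ f z + ((⟪-y, z⟫ : ℝ) : EReal) + ((⟪y, z⟫ : ℝ) : EReal) := add_le_add_left (hmin z) _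
    _ = f z := by
        rw [add_assoc, ← EReal.coe_add, inner_neg_left, neg_add_cancel, EReal.coe_zero, add_zero]

end Hilbert

theorem brezis_haraux_interior_inclusion_general
    {H : Type*} [NormedAddCommGroup H] [InnerProductSpace ℝ H] [CompleteSpace H]
    (φ₁ φ₂ : H → EReal)
    (h₁c : ConvexFunEReal φ₁) (h₂c : ConvexFunEReal φ₂)
    (h₁l : LowerSemicontinuous φ₁) (h₂l : LowerSemicontinuous φ₂)
    (hdom : ∃ x : H, φ₁ x ≠ ⊤ ∧ φ₁ x ≠ ⊥ ∧ φ₂ x ≠ ⊤ ∧ φ₂ x ≠ ⊥) :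
    interior (SubDiffRange φ₁ + SubDiffRange φ₂) ⊆
      interior (SubDiffRange (fun x => φ₁ x + φ₂ x)) := by
  refine interior_maximal (fun y hy => ?_) isOpen_interior
  obtain ⟨ε, hε, hball⟩ := Metric.mem_nhds_iff.1 (mem_interior_iff_mem_nhds.1 hy)
  obtain ⟨w₁, hw₁, w₂, hw₂, -⟩ := interior_subset hy
  have hsum := hasAffineMinorant_of_mem_add_subDiffRange (interior_subset hy)
  set g : H → EReal := fun x => φ₁ x + φ₂ x + ((⟪-y, x⟫ : ℝ) : EReal)
  have hgl : LowerSemicontinuous g :=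
    ((h₁l.ereal_add h₂l (hasAffineMinorant_of_mem_subDiffRange hw₁).ne_bot
      (hasAffineMinorant_of_mem_subDiffRange hw₂).ne_bot).ereal_add
      (continuous_coe_real_ereal.comp (continuous_const.inner continuous_id)).lowerSemicontinuous
      hsum.ne_bot fun _ => EReal.coe_ne_bot _)
  have hg_coercive : ∀ v ∈ Metric.ball (0 : H) ε, HasAffineMinorant g v := fun v hv => by
    have hyv : y + v ∈ Metric.ball y ε := by simpa using hv
    convert (hasAffineMinorant_of_mem_add_subDiffRange (hball hyv)).add
      (hasAffineMinorant_inner (-y)) using 1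
    abel
  obtain ⟨q, hq⟩ := hgl.exists_forall_le_of_quasiconvexOn
    ((h₁c.add h₂c).add (convexFunEReal_inner (-y))).quasiconvexOn
    fun t ht => isBounded_setOf_le_of_hasAffineMinorant hε hg_coercive ht
  obtain ⟨x₀, h₁x₀, -, h₂x₀, -⟩ := hdom
  exact ⟨q, mem_subDiff_of_forall_le ⟨x₀, (EReal.add_lt_top h₁x₀ h₂x₀).ne⟩ (hsum.ne_bot q) hq⟩

theorem brezis_haraux_interior_inclusion
    {H : Type*} [NormedAddCommGroup H] [InnerProductSpace ℝ H] [CompleteSpace H]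
    (φ₁ φ₂ : H → EReal)
    (h₁p : ProperFun φ₁) (h₂p : ProperFun φ₂)
    (h₁c : ConvexFunEReal φ₁) (h₂c : ConvexFunEReal φ₂)
    (h₁l : LowerSemicontinuous φ₁) (h₂l : LowerSemicontinuous φ₂)
    (hdom : ∃ x : H, φ₁ x ≠ ⊤ ∧ φ₁ x ≠ ⊥ ∧ φ₂ x ≠ ⊤ ∧ φ₂ x ≠ ⊥) :
    interior (SubDiffRange φ₁ + SubDiffRange φ₂) ⊆
      interior (SubDiffRange (fun x => φ₁ x + φ₂ x)) :=
  brezis_haraux_interior_inclusion_general φ₁ φ₂ h₁c h₂c h₁l h₂l hdom
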